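/- Let (X,S) be a non-degenerate, involutive and braided set-theoretical solution on a finite set X, and let M be its structure monoid. Then the elements of X admit a right lcm Δ in M, and Δ is a Garside element of M: the set of left divisors of Δ coincides with the set of right divisors of Δ (where a right-divides Δ if Δ = c·a for some c ∈ M), this set of divisors is finite, and it generates M. -/

import Mathlib

/-!
Sending `x` to `(e_x, g_x)` defines a monoid map `M → ℕ^X ⋊ Sym X`: involutivity and the braid
relation are exactly what make the defining relations of `M` hold there. Its first component
`v : M → ℕ^X` is an injective 1-cocycle, and `a` left-divides `b` iff `v a ≤ v b` coordinatewise,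
because a generator `x` can be split off on the left of `m` as soon as `v m x > 0`. Every 0/1-vector
is a value of `v`, so `Δ := v⁻¹(1, …, 1)` exists; it is the right lcm of `X`, and its left divisors
are the finitely many `a` with `v a ≤ 1`, among them all generators. Right divisors of `Δ` satisfy
`v ≤ 1` as well. Finally `M` is cancellative (on the right because reading relations backwards
gives `Mᵐᵒᵖ` as the structure monoid of another such solution), so the factorisations `Δ = a·c`
match left and right divisors bijectively, and two finite sets of the same size, one inside the
other, agree.
-/

namespace YBE

/-- `(X,S)` is non-degenerate: all the maps `g_x = y ↦ S(x,y).1` and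
`f_y = x ↦ S(x,y).2` are bijective. -/
def Nondegenerate {X : Type*} (S : X × X → X × X) : Prop :=
  (∀ x : X, Function.Bijective fun y => (S (x, y)).1) ∧
  (∀ y : X, Function.Bijective fun x => (S (x, y)).2)

/-- `(X,S)` is involutive: `S ∘ S = id`. -/
def InvolutiveSol {X : Type*} (S : X × X → X × X) : Prop := S ∘ S = id

/-- `S¹² = S × id` on `X × X × X`. -/
def S12 {X : Type*} (S : X × X → X × X) : X × X × X → X × X × X :=
  fun p => ((S (p.1, p.2.1)).1, (S (p.1, p.2.1)).2, p.2.2)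

/-- `S²³ = id × S` on `X × X × X`. -/
def S23 {X : Type*} (S : X × X → X × X) : X × X × X → X × X × X :=
  fun p => (p.1, S (p.2.1, p.2.2))

/-- `(X,S)` is braided: `S¹² ∘ S²³ ∘ S¹² = S²³ ∘ S¹² ∘ S²³`. -/
def BraidedSol {X : Type*} (S : X × X → X × X) : Prop :=
  S12 S ∘ S23 S ∘ S12 S = S23 S ∘ S12 S ∘ S23 S

/-- The map `g_x : y ↦ S(x,y).1`. -/
def gmap {X : Type*} (S : X × X → X × X) (x : X) : X → X := fun y => (S (x, y)).1

/-- The map `f_y : x ↦ S(x,y).2`. -/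
def fmap {X : Type*} (S : X × X → X × X) (y : X) : X → X := fun x => (S (x, y)).2

/-- The inverse `g_x⁻¹` of the (bijective) map `g_x`. -/
noncomputable def ginv {X : Type*} [Nonempty X] (S : X × X → X × X) (x : X) : X → X :=
  Function.invFun (gmap S x)

/-- The inverse `f_y⁻¹` of the (bijective) map `f_y`. -/
noncomputable def finv {X : Type*} [Nonempty X] (S : X × X → X × X) (y : X) : X → X :=
  Function.invFun (fmap S y)

/-- The defining relations of the structure monoid: `x·y = t·z` whenever `S(x,y) = (t,z)`. -/
def ybRel {X : Type*} (S : X × X → X × X) : FreeMonoid X → FreeMonoid X → Prop :=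
  fun a b => ∃ x y : X, a = FreeMonoid.of x * FreeMonoid.of y ∧
    b = FreeMonoid.of (S (x, y)).1 * FreeMonoid.of (S (x, y)).2

/-- The structure monoid of `(X,S)`: the monoid presented by generating set `X` and
relations `x·y = t·z` for each `x,y,t,z` with `S(x,y) = (t,z)`. -/
abbrev StructureMonoid {X : Type*} (S : X × X → X × X) : Type _ :=
  (conGen (ybRel S)).Quotient

/-- The image in the structure monoid of a generator `x ∈ X`. -/
def smi {X : Type*} (S : X × X → X × X) (x : X) : StructureMonoid S :=
  (conGen (ybRel S)).mk' (FreeMonoid.of x)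

/-- The defining relations of the structure group, as elements of the free group. -/
def ybGRels {X : Type*} (S : X × X → X × X) : Set (FreeGroup X) :=
  {w | ∃ x y : X, w = FreeGroup.of x * FreeGroup.of y *
    (FreeGroup.of (S (x, y)).1 * FreeGroup.of (S (x, y)).2)⁻¹}

/-- The structure group of `(X,S)`: the group presented by generating set `X` and
relations `x·y = t·z` for each `x,y,t,z` with `S(x,y) = (t,z)`. -/
abbrev StructureGroup {X : Type*} (S : X × X → X × X) : Type _ :=
  PresentedGroup (ybGRels S)

/-- `a` left-divides `b`. -/
def LDvd {M : Type*} [Monoid M] (a b : M) : Prop := ∃ c, b = a * c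

/-- `m` is a right lcm of the family `a`: each `a i` left-divides `m`, and `m`
left-divides every common right multiple of the `a i`. -/
def IsRightLcm {M : Type*} [Monoid M] {ι : Sort*} (a : ι → M) (m : M) : Prop :=
  (∀ i, LDvd (a i) m) ∧ ∀ w, (∀ i, LDvd (a i) w) → LDvd m w

/-- `⟨a, p⟩` stands for the affine map `v ↦ a + v ∘ p⁻¹` of `X → ℕ`, so that `AffPerm X` is the
semidirect product `ℕ^X ⋊ Sym X`. -/
@[ext]
structure AffPerm (X : Type*) where
  vec : X → ℕ
  perm : Equiv.Perm X

namespace AffPerm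

variable {X : Type*}

instance : One (AffPerm X) := ⟨⟨0, 1⟩⟩

instance : Mul (AffPerm X) := ⟨fun u v => ⟨u.vec + v.vec ∘ u.perm.symm, u.perm * v.perm⟩⟩

@[simp] lemma one_vec : (1 : AffPerm X).vec = 0 := rfl
@[simp] lemma mul_vec (u v : AffPerm X) : (u * v).vec = u.vec + v.vec ∘ u.perm.symm := rfl

instance : Monoid (AffPerm X) where
  one_mul u := AffPerm.ext (zero_add u.vec) (one_mul u.perm)
  mul_one u := AffPerm.ext (add_zero u.vec) (mul_one u.perm)
  mul_assoc u v w := AffPerm.ext (add_assoc _ _ _) (mul_assoc _ _ _)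

end AffPerm

class IsNondegInvolutiveSolution {X : Type*} (S : X × X → X × X) : Prop where
  nondegenerate : Nondegenerate S
  involutive : InvolutiveSol S
  braided : BraidedSol S

lemma involutive_apply {X : Type*} {S : X × X → X × X} [IsNondegInvolutiveSolution S]
    (p : X × X) : S (S p) = p :=
  congrFun (IsNondegInvolutiveSolution.involutive (S := S)) p

section Generators

variable {X : Type*} {S : X × X → X × X}

lemma smi_mul_smi (x y : X) : smi S x * smi S y = smi S (S (x, y)).1 * smi S (S (x, y)).2 :=
  (Con.eq _).mpr (ConGen.Rel.of _ _ ⟨x, y, rfl, rfl⟩)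

@[elab_as_elim]
lemma StructureMonoid.induction_on {P : StructureMonoid S → Prop} (m : StructureMonoid S)
    (one : P 1) (smi_mul : ∀ x m, P m → P (smi S x * m)) : P m := by
  induction m using Con.induction_on with
  | H w =>
    induction w using FreeMonoid.inductionOn' with
    | one => exact one
    | of_mul x w ih => exact smi_mul x _ ih

lemma closure_range_smi : Submonoid.closure (Set.range (smi S)) = ⊤ :=
  eq_top_iff.mpr fun m _ => m.induction_on (one_mem _)
    fun x _ hm => mul_mem (Submonoid.subset_closure ⟨x, rfl⟩) hm

end Generators

section OppositeSolution

variable {X : Type*}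

/-- The relations of `opSol S` are those of `S` read from right to left. -/
def opSol (S : X × X → X × X) : X × X → X × X := fun p => (S p.swap).swap

variable {S : X × X → X × X}

def reverseHom (S : X × X → X × X) : StructureMonoid S →* (StructureMonoid (opSol S))ᵐᵒᵖ :=
  (conGen (ybRel S)).lift (FreeMonoid.lift fun x => MulOpposite.op (smi (opSol S) x)) <|
    Con.conGen_le.mpr fun _ _ ⟨x, y, ha, hb⟩ => by
      subst ha hb
      simp only [Con.ker_rel, map_mul, FreeMonoid.lift_eval_of, ← MulOpposite.op_mul]
      exact congrArg MulOpposite.op (smi_mul_smi y x)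

@[simp] lemma reverseHom_smi (x : X) :
    reverseHom S (smi S x) = MulOpposite.op (smi (opSol S) x) :=
  (Con.lift_mk' _ _).trans (FreeMonoid.lift_eval_of _ x)

-- `opSol (opSol S)` is `S` up to η for pairs, so both sides live in `StructureMonoid S`.
lemma unop_reverseHom_unop_reverseHom (m : StructureMonoid S) :
    (reverseHom (opSol S) (reverseHom S m).unop).unop = m := by
  induction m using StructureMonoid.induction_on with
  | one => rfl
  | smi_mul x m ih =>
    simp only [map_mul, MulOpposite.unop_mul, reverseHom_smi, MulOpposite.unop_op, ih]
    rfl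

lemma reverseHom_injective : Function.Injective (reverseHom S) := fun m m' h => by
  have h' := congrArg (fun u => (reverseHom (opSol S) u.unop).unop) h
  simp only [unop_reverseHom_unop_reverseHom] at h'
  exact h'

instance [IsNondegInvolutiveSolution S] : IsNondegInvolutiveSolution (opSol S) where
  nondegenerate := ⟨(IsNondegInvolutiveSolution.nondegenerate (S := S)).2,
    (IsNondegInvolutiveSolution.nondegenerate (S := S)).1⟩
  involutive := funext fun p => by simp [opSol, involutive_apply]
  braided := funext fun ⟨a, b, c⟩ => by
    have h := congrFun (IsNondegInvolutiveSolution.braided (S := S)) (c, b, a)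
    simp only [S12, S23, opSol, Function.comp_apply, Prod.swap, Prod.ext_iff] at h ⊢
    tauto

end OppositeSolution

section Cocycle

variable {X : Type*} {S : X × X → X × X} [IsNondegInvolutiveSolution S]

variable (S) in
noncomputable def leftPerm (x : X) : Equiv.Perm X :=
  Equiv.ofBijective (gmap S x) (IsNondegInvolutiveSolution.nondegenerate.1 x)

@[simp] lemma leftPerm_apply (x y : X) : leftPerm S x y = (S (x, y)).1 := rfl

lemma leftPerm_fst_snd (x y : X) : leftPerm S (S (x, y)).1 (S (x, y)).2 = x :=
  congrArg Prod.fst (involutive_apply (S := S) (x, y))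

lemma leftPerm_mul_leftPerm (x y : X) :
    leftPerm S x * leftPerm S y = leftPerm S (S (x, y)).1 * leftPerm S (S (x, y)).2 := by
  ext w
  exact (congrArg Prod.fst (congrFun (IsNondegInvolutiveSolution.braided (S := S)) (x, y, w))).symm

variable [DecidableEq X]

lemma single_one_comp_symm (π : Equiv.Perm X) (x : X) :
    (Pi.single x 1 : X → ℕ) ∘ π.symm = Pi.single (π x) 1 := by
  ext t
  simp only [Function.comp_apply, Pi.single_apply, Equiv.symm_apply_eq]

variable (S) in
noncomputable def toAffPerm : StructureMonoid S →* AffPerm X :=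
  (conGen (ybRel S)).lift (FreeMonoid.lift fun x => ⟨Pi.single x 1, leftPerm S x⟩) <|
    Con.conGen_le.mpr fun _ _ ⟨x, y, ha, hb⟩ => by
      subst ha hb
      simp only [Con.ker_rel, map_mul, FreeMonoid.lift_eval_of]
      refine AffPerm.ext ?_ (leftPerm_mul_leftPerm x y)
      simp only [AffPerm.mul_vec, single_one_comp_symm]
      rw [leftPerm_fst_snd, leftPerm_apply]
      exact add_comm _ _

lemma toAffPerm_smi (x : X) : toAffPerm S (smi S x) = ⟨Pi.single x 1, leftPerm S x⟩ :=
  (Con.lift_mk' _ _).trans (FreeMonoid.lift_eval_of _ x)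

variable (S) in
noncomputable def cocycle (m : StructureMonoid S) : X → ℕ := (toAffPerm S m).vec

lemma cocycle_mul (m m' : StructureMonoid S) :
    cocycle S (m * m') = cocycle S m + cocycle S m' ∘ (toAffPerm S m).perm.symm := by
  simp [cocycle]

@[simp] lemma cocycle_one : cocycle S 1 = 0 := by simp [cocycle]

@[simp] lemma cocycle_smi (x : X) : cocycle S (smi S x) = Pi.single x 1 := by
  simp [cocycle, toAffPerm_smi]

lemma cocycle_smi_mul (x : X) (m : StructureMonoid S) :
    cocycle S (smi S x * m) = Pi.single x 1 + cocycle S m ∘ (leftPerm S x).symm := by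
  simp [cocycle_mul, toAffPerm_smi]

lemma cocycle_mul_le_cocycle_mul_iff (a : StructureMonoid S) {m m' : StructureMonoid S} :
    cocycle S (a * m) ≤ cocycle S (a * m') ↔ cocycle S m ≤ cocycle S m' := by
  rw [cocycle_mul, cocycle_mul, add_le_add_iff_left]
  exact ⟨fun h t => by simpa using h ((toAffPerm S a).perm t), fun h t => h _⟩

lemma smi_ldvd_of_cocycle_pos {m : StructureMonoid S} {x : X} (h : 0 < cocycle S m x) :
    LDvd (smi S x) m := by
  induction m using StructureMonoid.induction_on generalizing x with
  | one => simp at h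
  | smi_mul y m ih =>
    by_cases hxy : x = y
    · exact ⟨m, by rw [hxy]⟩
    · rw [cocycle_smi_mul] at h
      obtain ⟨m', rfl⟩ := ih (x := (leftPerm S y).symm x) (by simpa [Pi.single_apply, hxy] using h)
      have hx : (S (y, (leftPerm S y).symm x)).1 = x := (leftPerm S y).apply_symm_apply x
      exact ⟨smi S (S (y, (leftPerm S y).symm x)).2 * m', by
        rw [← mul_assoc, smi_mul_smi, hx, mul_assoc]⟩

lemma ldvd_of_cocycle_le {m m' : StructureMonoid S} (h : cocycle S m ≤ cocycle S m') :
    LDvd m m' := by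
  induction m using StructureMonoid.induction_on generalizing m' with
  | one => exact ⟨m', (one_mul m').symm⟩
  | smi_mul x m ih =>
    have hx : 0 < cocycle S m' x :=
      lt_of_lt_of_le (by simp [cocycle_smi_mul]) (h x)
    obtain ⟨m', rfl⟩ := smi_ldvd_of_cocycle_pos hx
    obtain ⟨c, rfl⟩ := ih ((cocycle_mul_le_cocycle_mul_iff _).mp h)
    exact ⟨c, by rw [mul_assoc]⟩

lemma ldvd_iff_cocycle_le {m m' : StructureMonoid S} :
    LDvd m m' ↔ cocycle S m ≤ cocycle S m' := by
  refine ⟨?_, ldvd_of_cocycle_le⟩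
  rintro ⟨c, rfl⟩
  simp [cocycle_mul]

lemma eq_one_of_cocycle_eq_zero {m : StructureMonoid S} (h : cocycle S m = 0) : m = 1 := by
  induction m using StructureMonoid.induction_on with
  | one => rfl
  | smi_mul x m _ => simpa [cocycle_smi_mul] using congrFun h x

lemma cocycle_injective : Function.Injective (cocycle S) := by
  intro m m' h
  obtain ⟨c, rfl⟩ := ldvd_of_cocycle_le h.le
  have hc : cocycle S c = 0 := by
    ext t
    simpa [cocycle_mul] using congrFun h ((toAffPerm S m).perm t)
  rw [eq_one_of_cocycle_eq_zero hc, mul_one]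

end Cocycle

section Cancellation

variable {X : Type*} {S : X × X → X × X} [IsNondegInvolutiveSolution S]

instance : IsLeftCancelMul (StructureMonoid S) where
  mul_left_cancel a b c h := by
    classical
    have h' := congrArg (cocycle S) h
    exact cocycle_injective (le_antisymm ((cocycle_mul_le_cocycle_mul_iff a).mp h'.le)
      ((cocycle_mul_le_cocycle_mul_iff a).mp h'.ge))

instance : IsRightCancelMul (StructureMonoid S) where
  mul_right_cancel a b c h := by
    have h' := congrArg (fun m => (reverseHom S m).unop) h
    simp only [map_mul, MulOpposite.unop_mul] at h'
    exact reverseHom_injective (MulOpposite.unop_injective (mul_left_cancel h'))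

end Cancellation

lemma ncard_setOf_ldvd_eq_ncard_setOf_rdvd {M : Type*} [Monoid M] [IsLeftCancelMul M]
    [IsRightCancelMul M] (m : M) :
    {a | ∃ c, m = a * c}.ncard = {c | ∃ a, m = a * c}.ncard := by
  set P := {p : M × M | m = p.1 * p.2}
  have hfst : {a | ∃ c, m = a * c} = Prod.fst '' P := by ext; simp [P]
  have hsnd : {c | ∃ a, m = a * c} = Prod.snd '' P := by ext; simp [P]
  rw [hfst, hsnd, Set.InjOn.ncard_image, Set.InjOn.ncard_image]
  · exact fun p hp q hq h => Prod.ext (mul_right_cancel (hp.symm.trans (h ▸ hq))) h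
  · exact fun p hp q hq h => Prod.ext h (mul_left_cancel (hp.symm.trans (h ▸ hq)))

section Garside

variable {X : Type*} {S : X × X → X × X} [IsNondegInvolutiveSolution S] [DecidableEq X]

lemma exists_cocycle_eq_sum_single (A : Finset X) :
    ∃ m : StructureMonoid S, cocycle S m = ∑ x ∈ A, Pi.single x 1 := by
  induction A using Finset.induction_on with
  | empty => exact ⟨1, by simp⟩
  | insert x A hx ih =>
    obtain ⟨m, hm⟩ := ih
    refine ⟨m * smi S ((toAffPerm S m).perm.symm x), ?_⟩
    rw [cocycle_mul, hm, cocycle_smi, single_one_comp_symm, Equiv.apply_symm_apply,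
      Finset.sum_insert hx, add_comm]

lemma exists_cocycle_eq_one [Fintype X] : ∃ Δ : StructureMonoid S, cocycle S Δ = 1 := by
  obtain ⟨Δ, hΔ⟩ := exists_cocycle_eq_sum_single (S := S) Finset.univ
  exact ⟨Δ, hΔ.trans (Finset.univ_sum_single 1)⟩

lemma finite_setOf_ldvd [Finite X] (m : StructureMonoid S) : {a | LDvd a m}.Finite := by
  have := Fintype.ofFinite X
  exact ((Set.finite_Iic (cocycle S m)).preimage cocycle_injective.injOn).subset
    fun _ => ldvd_iff_cocycle_le.mp

variable {Δ : StructureMonoid S} (hΔ : cocycle S Δ = 1)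
include hΔ

lemma isRightLcm_smi : IsRightLcm (smi S) Δ := by
  refine ⟨fun x => ldvd_iff_cocycle_le.mpr ?_, fun w hw => ldvd_iff_cocycle_le.mpr ?_⟩
  · rw [cocycle_smi, hΔ]
    intro t
    by_cases h : t = x <;> simp [h]
  · rw [hΔ]
    intro t
    simpa using ldvd_iff_cocycle_le.mp (hw t) t

lemma ldvd_of_rdvd {a c : StructureMonoid S} (h : Δ = c * a) : LDvd a Δ := by
  rw [ldvd_iff_cocycle_le, hΔ]
  intro t
  have := congrFun (congrArg (cocycle S) h) ((toAffPerm S c).perm t)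
  simp only [hΔ, cocycle_mul, Pi.one_apply, Pi.add_apply, Function.comp_apply,
    Equiv.symm_apply_apply] at this ⊢
  omega

lemma ldvd_iff_rdvd [Finite X] (a : StructureMonoid S) : LDvd a Δ ↔ ∃ c, Δ = c * a := by
  have hdvd : {c | ∃ a, Δ = a * c} = {a | LDvd a Δ} :=
    Set.eq_of_subset_of_ncard_le (fun c ⟨a, h⟩ => ldvd_of_rdvd hΔ h)
      (ncard_setOf_ldvd_eq_ncard_setOf_rdvd Δ).le (finite_setOf_ldvd Δ)
  exact (Set.ext_iff.mp hdvd a).symm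

end Garside

/-- The generators of the structure monoid admit a right lcm `Δ`, and `Δ` is a Garside
element: its left divisors coincide with its right divisors, form a finite set, and
generate the monoid. -/
theorem stmt7 {X : Type*} [Finite X] (S : X × X → X × X)
    (hnd : Nondegenerate S) (hinv : InvolutiveSol S) (hbr : BraidedSol S) :
    ∃ Δ : StructureMonoid S,
      IsRightLcm (fun x : X => smi S x) Δ ∧
      (∀ a : StructureMonoid S, (∃ c, Δ = a * c) ↔ (∃ c, Δ = c * a)) ∧
      {a : StructureMonoid S | ∃ c, Δ = a * c}.Finite ∧
      Submonoid.closure {a : StructureMonoid S | ∃ c, Δ = a * c} = ⊤ := by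
  classical
  have : IsNondegInvolutiveSolution S := ⟨hnd, hinv, hbr⟩
  have := Fintype.ofFinite X
  obtain ⟨Δ, hΔ⟩ := exists_cocycle_eq_one (S := S)
  have hlcm := isRightLcm_smi hΔ
  refine ⟨Δ, hlcm, ldvd_iff_rdvd hΔ, finite_setOf_ldvd Δ, eq_top_iff.mpr ?_⟩
  rw [← closure_range_smi]
  exact Submonoid.closure_mono (Set.range_subset_iff.mpr hlcm.1)

end YBE
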